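/- arXiv:1410.1618 — 7 statements merged into one kernel-verified Lean document; each statement's English description precedes it below -/
import Mathlib

section
/- Let Σ be a subset of the vertex set of a finite simplicial graph Γ, and let x ∈ A_Γ be such that x ∈ y⁻¹ A_Σ y for some y ∈ A_Γ. Then every cyclically reduced word whose value in A_Γ is conjugate to x is a word in the alphabet Σ; in particular, its value lies in A_Σ. -/
/-- The link of a set of vertices: vertices adjacent to every vertex of `Δ`
(with `lkSet G ∅ = Set.univ`). -/
def lkSet {V : Type*} (G : SimpleGraph V) (Δ : Set V) : Set V :=
  {u | ∀ v ∈ Δ, G.Adj v u}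

/-- The star of a set of vertices. -/
def stSet {V : Type*} (G : SimpleGraph V) (Δ : Set V) : Set V :=
  Δ ∪ lkSet G Δ

/-- The extended star of a set of vertices. -/
def estSet {V : Type*} (G : SimpleGraph V) (Δ : Set V) : Set V :=
  lkSet G Δ ∪ lkSet G (lkSet G Δ)

/-- A set of vertices is a cone if some vertex of it is adjacent to all the others. -/
def IsCone {V : Type*} (G : SimpleGraph V) (Θ : Set V) : Prop :=
  ∃ a ∈ Θ, ∀ u ∈ Θ, u ≠ a → G.Adj a u

open scoped commutatorElement

/-- Defining relations of the right-angled Artin group of `G`: commutators of adjacent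
generators. -/
def raagRels {V : Type*} (G : SimpleGraph V) : Set (FreeGroup V) :=
  {r | ∃ u v : V, G.Adj u v ∧ r = ⁅FreeGroup.of u, FreeGroup.of v⁆}

/-- The right-angled Artin group on the graph `G`. -/
abbrev RAAG {V : Type*} (G : SimpleGraph V) : Type _ :=
  PresentedGroup (raagRels G)

/-- The generator of `RAAG G` corresponding to a vertex. -/
def raagGen {V : Type*} (G : SimpleGraph V) (v : V) : RAAG G :=
  PresentedGroup.of v

/-- The special subgroup `A_Δ` of `RAAG G` generated by the vertices of `Δ`. -/
def raagSub {V : Type*} (G : SimpleGraph V) (Δ : Set V) : Subgroup (RAAG G) :=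
  Subgroup.closure (raagGen G '' Δ)

/-- A word in the alphabet of vertices: a letter is a vertex together with a sign
(`true` for the generator, `false` for its inverse). -/
abbrev RaagWord (V : Type*) := List (V × Bool)

/-- The value of a word in the right-angled Artin group. -/
def wordValue {V : Type*} (G : SimpleGraph V) (w : RaagWord V) : RAAG G :=
  (w.map fun p => if p.2 then raagGen G p.1 else (raagGen G p.1)⁻¹).prod

/-- Two letters commute iff their vertices are equal or adjacent. -/
def lettersCommute {V : Type*} (G : SimpleGraph V) (u v : V) : Prop :=
  u = v ∨ G.Adj u v

/-- The word `w` admits a reduction: two letters at positions `i < j` carry the same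
vertex with opposite signs, and every letter strictly between them commutes with the
deleted letter. -/
def HasReduction {V : Type*} (G : SimpleGraph V) (w : RaagWord V) : Prop :=
  ∃ (i j : ℕ) (hi : i < w.length) (hj : j < w.length), i < j ∧
    (w.get ⟨i, hi⟩).1 = (w.get ⟨j, hj⟩).1 ∧
    (w.get ⟨i, hi⟩).2 = !(w.get ⟨j, hj⟩).2 ∧
    ∀ (k : ℕ) (hk : k < w.length), i < k → k < j →
      lettersCommute G (w.get ⟨k, hk⟩).1 (w.get ⟨i, hi⟩).1

/-- The word `w` admits a cyclic reduction: two letters at positions `i < j` carry the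
same vertex with opposite signs, and every letter before position `i` or after
position `j` commutes with the deleted letter. -/
def HasCyclicReduction {V : Type*} (G : SimpleGraph V) (w : RaagWord V) : Prop :=
  ∃ (i j : ℕ) (hi : i < w.length) (hj : j < w.length), i < j ∧
    (w.get ⟨i, hi⟩).1 = (w.get ⟨j, hj⟩).1 ∧
    (w.get ⟨i, hi⟩).2 = !(w.get ⟨j, hj⟩).2 ∧
    ∀ (k : ℕ) (hk : k < w.length), (k < i ∨ j < k) →
      lettersCommute G (w.get ⟨k, hk⟩).1 (w.get ⟨i, hi⟩).1

/-- A word is cyclically reduced if it admits neither a reduction nor a cyclic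
reduction. -/
def CyclicallyReduced {V : Type*} (G : SimpleGraph V) (w : RaagWord V) : Prop :=
  ¬ HasReduction G w ∧ ¬ HasCyclicReduction G w

/-!
Two cyclically reduced words with conjugate values differ by swaps of adjacent commuting
letters and cyclic rotations (the conjugacy theorem for right-angled Artin groups). Both
operations permute letters, so a cyclically reduced word conjugate to an element of `A_Σ` uses
the letters of a cyclic reduction of a word for that element in the alphabet `Σ`.

The conjugacy theorem rests on the normal form theorem: reduced words with equal values differ
by swaps. It is proved by letting `A_Γ` act on swap classes of reduced words, a letter acting
by left multiplication followed by the possible cancellation. For a cyclically reduced `u` and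
any word `d`, a cancellation in `d⁻¹ u d` can be traded for a shorter conjugator at the cost of
rotating `u` up to swaps; hence some reduced `e⁻¹ u' e` with `u'` equivalent to `u` has the
value of `d⁻¹ u d`. When that is also the value of a cyclically reduced word `w`, the word `w`
is a swap of `e⁻¹ u' e`, which forces `e` to be empty.
-/

namespace List

theorem append_eq_append_cons_iff {α : Type*} {A B P S : List α} {x : α} :
    A ++ B = P ++ x :: S ↔
      (∃ T, A = P ++ x :: T ∧ S = T ++ B) ∨ (∃ T, P = A ++ T ∧ B = T ++ x :: S) := by
  rw [append_eq_append_iff]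
  constructor
  · rintro (⟨T, rfl, hB⟩ | ⟨T, rfl, hxS⟩)
    · exact Or.inr ⟨T, rfl, hB⟩
    · rcases T with _ | ⟨t, T⟩
      · exact Or.inr ⟨[], by simp, by simpa using hxS.symm⟩
      · obtain ⟨rfl, rfl⟩ := cons_eq_cons.mp hxS
        exact Or.inl ⟨T, rfl, rfl⟩
  · rintro (⟨T, rfl, rfl⟩ | ⟨T, rfl, rfl⟩)
    · exact Or.inr ⟨x :: T, by simp, rfl⟩
    · exact Or.inl ⟨T, rfl, rfl⟩

theorem IsRotated.exists_eq_append {α : Type*} {l l' : List α} (h : l ~r l') :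
    ∃ u v, l = u ++ v ∧ l' = v ++ u := by
  obtain ⟨n, hn, rfl⟩ := isRotated_iff_mod.mp h
  exact ⟨l.take n, l.drop n, (take_append_drop n l).symm, rotate_eq_drop_append_take hn⟩

theorem getElem_of_eq_append_cons {α : Type*} {w A B : List α} {y : α} (hw : w = A ++ y :: B)
    {k : ℕ} (hk : k < w.length) (h : k = A.length) : w[k] = y := by
  subst hw h
  simp

theorem getElem_mem_of_eq_append {α : Type*} {w A M B : List α} (hw : w = A ++ M ++ B) {k : ℕ}
    (hk : k < w.length) (h₁ : A.length ≤ k) (h₂ : k < A.length + M.length) : w[k] ∈ M := by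
  subst hw
  rw [getElem_append_left (by simp; omega), getElem_append_right h₁]
  exact getElem_mem _

end List

/-! ### Words and their values -/

namespace RaagWord

variable {V : Type*}

def letterInv (p : V × Bool) : V × Bool := (p.1, !p.2)

@[simp] lemma letterInv_letterInv (p : V × Bool) : letterInv (letterInv p) = p := by
  simp [letterInv]

@[simp] lemma letterInv_fst (p : V × Bool) : (letterInv p).1 = p.1 := rfl

def invWord (w : RaagWord V) : RaagWord V := (w.map letterInv).reverse

@[simp] lemma invWord_nil : invWord ([] : RaagWord V) = [] := rfl

@[simp] lemma invWord_cons (p : V × Bool) (w : RaagWord V) :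
    invWord (p :: w) = invWord w ++ [letterInv p] := by
  simp [invWord]

@[simp] lemma invWord_append (u w : RaagWord V) : invWord (u ++ w) = invWord w ++ invWord u := by
  simp [invWord]

@[simp] lemma invWord_invWord (w : RaagWord V) : invWord (invWord w) = w := by
  simp [invWord, Function.comp_def]

lemma mem_invWord {p : V × Bool} {w : RaagWord V} : p ∈ invWord w ↔ letterInv p ∈ w := by
  simp only [invWord, List.mem_reverse, List.mem_map]
  exact ⟨fun ⟨q, hq, hqp⟩ => hqp ▸ by simpa using hq,
    fun h => ⟨_, h, letterInv_letterInv p⟩⟩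

variable {G : SimpleGraph V}

variable (G) in
def letterValue (p : V × Bool) : RAAG G :=
  if p.2 then raagGen G p.1 else (raagGen G p.1)⁻¹

@[simp] lemma wordValue_nil : wordValue G ([] : RaagWord V) = 1 := rfl

@[simp] lemma wordValue_cons (p : V × Bool) (w : RaagWord V) :
    wordValue G (p :: w) = letterValue G p * wordValue G w := by
  simp [wordValue, letterValue]

@[simp] lemma wordValue_append (u w : RaagWord V) :
    wordValue G (u ++ w) = wordValue G u * wordValue G w := by
  simp [wordValue]

@[simp] lemma letterValue_letterInv (p : V × Bool) :
    letterValue G (letterInv p) = (letterValue G p)⁻¹ := by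
  rcases p with ⟨v, _ | _⟩ <;> simp [letterValue, letterInv]

@[simp] lemma wordValue_invWord (w : RaagWord V) :
    wordValue G (invWord w) = (wordValue G w)⁻¹ := by
  induction w with
  | nil => simp
  | cons p w ih => simp [ih]

lemma _root_.lettersCommute.symm {u v : V} (h : lettersCommute G u v) : lettersCommute G v u :=
  h.imp Eq.symm SimpleGraph.Adj.symm

lemma commute_raagGen {u v : V} (h : lettersCommute G u v) :
    Commute (raagGen G u) (raagGen G v) := by
  rcases h with rfl | h
  · exact Commute.refl _
  · have hrel : PresentedGroup.mk (raagRels G) ⁅FreeGroup.of u, FreeGroup.of v⁆ = 1 :=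
      (QuotientGroup.eq_one_iff _).mpr (Subgroup.subset_normalClosure ⟨u, v, h, rfl⟩)
    rw [map_commutatorElement] at hrel
    exact commutatorElement_eq_one_iff_commute.mp hrel

lemma commute_letterValue {p q : V × Bool} (h : lettersCommute G p.1 q.1) :
    Commute (letterValue G p) (letterValue G q) := by
  have := commute_raagGen h
  unfold letterValue
  split_ifs <;> simp [Commute.inv_left_iff, Commute.inv_right_iff, this]

lemma commute_wordValue_letterValue {w : RaagWord V} {p : V × Bool}
    (h : ∀ l ∈ w, lettersCommute G l.1 p.1) : Commute (wordValue G w) (letterValue G p) := by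
  induction w with
  | nil => exact Commute.one_left _
  | cons q w ih =>
    rw [wordValue_cons]
    exact (commute_letterValue (h q (by simp))).mul_left (ih fun l hl => h l (by simp [hl]))

lemma exists_word_of_mem_raagSub {Δ : Set V} {g : RAAG G} (hg : g ∈ raagSub G Δ) :
    ∃ w : RaagWord V, (∀ p ∈ w, p.1 ∈ Δ) ∧ wordValue G w = g := by
  induction hg using Subgroup.closure_induction with
  | mem g hg =>
    obtain ⟨v, hv, rfl⟩ := hg
    exact ⟨[(v, true)], by simpa using hv, by simp [letterValue]⟩
  | one => exact ⟨[], by simp, rfl⟩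
  | mul g h _ _ ihg ihh =>
    obtain ⟨u, hu, rfl⟩ := ihg
    obtain ⟨w, hw, rfl⟩ := ihh
    exact ⟨u ++ w, fun p hp => (List.mem_append.mp hp).elim (hu p) (hw p), wordValue_append u w⟩
  | inv g _ ih =>
    obtain ⟨w, hw, rfl⟩ := ih
    exact ⟨invWord w, fun p hp => by simpa using hw _ (mem_invWord.mp hp), wordValue_invWord w⟩

lemma exists_wordValue_eq (g : RAAG G) : ∃ w : RaagWord V, wordValue G w = g := by
  have hg : g ∈ raagSub G Set.univ := by
    rw [raagSub, Set.image_univ]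
    exact (PresentedGroup.closure_range_of (raagRels G)).ge trivial
  obtain ⟨w, -, hw⟩ := exists_word_of_mem_raagSub hg
  exact ⟨w, hw⟩

lemma wordValue_mem_raagSub {Δ : Set V} {w : RaagWord V} (h : ∀ p ∈ w, p.1 ∈ Δ) :
    wordValue G w ∈ raagSub G Δ := by
  induction w with
  | nil => exact Subgroup.one_mem _
  | cons p w ih =>
    rw [wordValue_cons]
    refine Subgroup.mul_mem _ ?_ (ih fun q hq => h q (by simp [hq]))
    have hp : raagGen G p.1 ∈ raagSub G Δ :=
      Subgroup.subset_closure ⟨p.1, h p (by simp), rfl⟩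
    unfold letterValue
    split_ifs
    exacts [hp, Subgroup.inv_mem _ hp]

/-! ### Cancellations and swaps -/

variable (G) in
def CanCancel (x : V × Bool) (w : RaagWord V) : Prop :=
  ∃ M S, w = M ++ letterInv x :: S ∧ ∀ l ∈ M, lettersCommute G l.1 x.1

variable (G) in
def HasCancellation (w : RaagWord V) : Prop :=
  ∃ P x M S, w = P ++ x :: (M ++ letterInv x :: S) ∧ ∀ l ∈ M, lettersCommute G l.1 x.1

variable (G) in
def IsReduced (w : RaagWord V) : Prop := ¬ HasCancellation G w

lemma canCancel_append_iff {x : V × Bool} {A B : RaagWord V} :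
    CanCancel G x (A ++ B) ↔
      CanCancel G x A ∨ (∀ l ∈ A, lettersCommute G l.1 x.1) ∧ CanCancel G x B := by
  constructor
  · rintro ⟨M, S, h, hM⟩
    rcases List.append_eq_append_cons_iff.mp h with ⟨T, rfl, -⟩ | ⟨T, rfl, rfl⟩
    · exact Or.inl ⟨M, T, rfl, hM⟩
    · exact Or.inr ⟨fun l hl => hM l (by simp [hl]),
        T, S, rfl, fun l hl => hM l (by simp [hl])⟩
  · rintro (⟨M, S, rfl, hM⟩ | ⟨hA, M, S, rfl, hM⟩)
    · exact ⟨M, S ++ B, by simp, hM⟩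
    · exact ⟨A ++ M, S, by simp, fun l hl => (List.mem_append.mp hl).elim (hA l) (hM l)⟩

lemma canCancel_cons_iff {x y : V × Bool} {w : RaagWord V} :
    CanCancel G x (y :: w) ↔
      y = letterInv x ∨ lettersCommute G y.1 x.1 ∧ CanCancel G x w := by
  have hy : CanCancel G x [y] ↔ y = letterInv x := by
    refine ⟨fun ⟨M, S, h, _⟩ => ?_, fun h => ⟨[], [], by simp [h], by simp⟩⟩
    rcases M with _ | ⟨m, M⟩
    · exact (List.cons_eq_cons.mp (by simpa using h)).1
    · simp at h
  simpa [hy] using canCancel_append_iff (G := G) (x := x) (A := [y]) (B := w)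

lemma hasCancellation_cons_iff {y : V × Bool} {w : RaagWord V} :
    HasCancellation G (y :: w) ↔ CanCancel G y w ∨ HasCancellation G w := by
  constructor
  · rintro ⟨_ | ⟨p, P⟩, x, M, S, h, hM⟩
    · obtain ⟨rfl, rfl⟩ := List.cons_eq_cons.mp h
      exact Or.inl ⟨M, S, rfl, hM⟩
    · obtain ⟨rfl, rfl⟩ := List.cons_eq_cons.mp h
      exact Or.inr ⟨P, x, M, S, rfl, hM⟩
  · rintro (⟨M, S, rfl, hM⟩ | ⟨P, x, M, S, rfl, hM⟩)
    · exact ⟨[], y, M, S, rfl, hM⟩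
    · exact ⟨y :: P, x, M, S, rfl, hM⟩

lemma HasCancellation.append_left {w : RaagWord V} (h : HasCancellation G w) (u : RaagWord V) :
    HasCancellation G (u ++ w) := by
  obtain ⟨P, x, M, S, rfl, hM⟩ := h
  exact ⟨u ++ P, x, M, S, by simp, hM⟩

lemma HasCancellation.append_right {w : RaagWord V} (h : HasCancellation G w) (u : RaagWord V) :
    HasCancellation G (w ++ u) := by
  obtain ⟨P, x, M, S, rfl, hM⟩ := h
  exact ⟨P, x, M, S ++ u, by simp, hM⟩

lemma HasCancellation.append_cases {A B : RaagWord V} (h : HasCancellation G (A ++ B)) :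
    HasCancellation G A ∨ HasCancellation G B ∨
      ∃ P x M₁ M₂ S, A = P ++ x :: M₁ ∧ B = M₂ ++ letterInv x :: S ∧
        ∀ l ∈ M₁ ++ M₂, lettersCommute G l.1 x.1 := by
  obtain ⟨P, x, M, S, h, hM⟩ := h
  rcases List.append_eq_append_cons_iff.mp h with ⟨T, rfl, hT⟩ | ⟨T, rfl, rfl⟩
  · rcases List.append_eq_append_cons_iff.mp hT.symm with ⟨T', rfl, -⟩ | ⟨T', rfl, rfl⟩
    · exact Or.inl ⟨P, x, M, T', rfl, hM⟩
    · exact Or.inr (Or.inr ⟨P, x, T, T', S, rfl, rfl, hM⟩)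
  · exact Or.inr (Or.inl ⟨T, x, M, S, rfl, hM⟩)

lemma HasCancellation.of_invWord {w : RaagWord V} (h : HasCancellation G (invWord w)) :
    HasCancellation G w := by
  obtain ⟨P, x, M, S, hw, hM⟩ := h
  refine ⟨invWord S, x, invWord M, invWord P, ?_,
    fun l hl => by simpa using hM _ (mem_invWord.mp hl)⟩
  rw [← invWord_invWord w, hw]
  simp

lemma wordValue_cancel {P M S : RaagWord V} {x : V × Bool}
    (hM : ∀ l ∈ M, lettersCommute G l.1 x.1) :
    wordValue G (P ++ x :: (M ++ letterInv x :: S)) = wordValue G (P ++ (M ++ S)) := by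
  have hc := commute_wordValue_letterValue hM
  simp only [wordValue_append, wordValue_cons, letterValue_letterInv]
  rw [← mul_assoc (letterValue G x), ← hc.eq]
  group

lemma HasCancellation.exists_shorter {w : RaagWord V} (h : HasCancellation G w) :
    ∃ w', w'.length < w.length ∧ (∀ p ∈ w', p ∈ w) ∧
      wordValue G w' = wordValue G w := by
  obtain ⟨P, x, M, S, rfl, hM⟩ := h
  refine ⟨P ++ (M ++ S), by simp, fun p hp => ?_, (wordValue_cancel hM).symm⟩
  simp only [List.mem_append, List.mem_cons] at hp ⊢
  tauto

variable (G) in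
def SwapStep (w w' : RaagWord V) : Prop :=
  ∃ A a b B, w = A ++ a :: b :: B ∧ w' = A ++ b :: a :: B ∧ lettersCommute G a.1 b.1

variable (G) in
def SwapEquiv : RaagWord V → RaagWord V → Prop := Relation.ReflTransGen (SwapStep G)

lemma SwapStep.symm {w w' : RaagWord V} (h : SwapStep G w w') : SwapStep G w' w := by
  obtain ⟨A, a, b, B, rfl, rfl, hab⟩ := h
  exact ⟨A, b, a, B, rfl, rfl, hab.symm⟩

lemma SwapStep.append_left {w w' : RaagWord V} (h : SwapStep G w w') (u : RaagWord V) :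
    SwapStep G (u ++ w) (u ++ w') := by
  obtain ⟨A, a, b, B, rfl, rfl, hab⟩ := h
  exact ⟨u ++ A, a, b, B, by simp, by simp, hab⟩

lemma SwapStep.perm {w w' : RaagWord V} (h : SwapStep G w w') : w.Perm w' := by
  obtain ⟨A, a, b, B, rfl, rfl, -⟩ := h
  exact (List.Perm.swap b a B).append_left A

lemma SwapStep.wordValue_eq {w w' : RaagWord V} (h : SwapStep G w w') :
    wordValue G w = wordValue G w' := by
  obtain ⟨A, a, b, B, rfl, rfl, hab⟩ := h
  simp only [wordValue_append, wordValue_cons, ← mul_assoc, (commute_letterValue hab).eq]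

@[refl] lemma SwapEquiv.refl (w : RaagWord V) : SwapEquiv G w w := Relation.ReflTransGen.refl

lemma SwapEquiv.symm {w w' : RaagWord V} (h : SwapEquiv G w w') : SwapEquiv G w' w := by
  induction h with
  | refl => rfl
  | tail _ hs ih => exact .head hs.symm ih

lemma SwapEquiv.append_left {w w' : RaagWord V} (h : SwapEquiv G w w') (u : RaagWord V) :
    SwapEquiv G (u ++ w) (u ++ w') := by
  induction h with
  | refl => rfl
  | tail _ hs ih => exact ih.tail (hs.append_left u)

lemma SwapEquiv.perm {w w' : RaagWord V} (h : SwapEquiv G w w') : w.Perm w' := by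
  induction h with
  | refl => rfl
  | tail _ hs ih => exact ih.trans hs.perm

lemma SwapEquiv.wordValue_eq {w w' : RaagWord V} (h : SwapEquiv G w w') :
    wordValue G w = wordValue G w' := by
  induction h with
  | refl => rfl
  | tail _ hs ih => exact ih.trans hs.wordValue_eq

lemma swapEquiv_cons_append {x : V × Bool} {A : RaagWord V} (B : RaagWord V)
    (hA : ∀ l ∈ A, lettersCommute G l.1 x.1) : SwapEquiv G (x :: (A ++ B)) (A ++ x :: B) := by
  induction A with
  | nil => rfl
  | cons a A ih =>
    have hstep : SwapStep G (x :: a :: (A ++ B)) (a :: x :: (A ++ B)) :=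
      ⟨[], x, a, A ++ B, rfl, rfl, (hA a (by simp)).symm⟩
    exact .head hstep ((ih fun l hl => hA l (by simp [hl])).append_left [a])

lemma isReduced_nil : IsReduced G ([] : RaagWord V) := by
  rintro ⟨P, x, M, S, h, -⟩
  simp at h

lemma canCancel_cons_iff_of_ne {x z : V × Bool} {w : RaagWord V} (hne : z.1 ≠ x.1)
    (hzx : lettersCommute G z.1 x.1) : CanCancel G x (z :: w) ↔ CanCancel G x w := by
  rw [canCancel_cons_iff, or_iff_right (fun h => hne (by simp [h])), and_iff_right hzx]

lemma SwapStep.canCancel {x : V × Bool} {w w' : RaagWord V} (h : SwapStep G w w')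
    (hw : CanCancel G x w) : CanCancel G x w' := by
  obtain ⟨A, a, b, B, rfl, rfl, hab⟩ := h
  refine canCancel_append_iff.mpr
    ((canCancel_append_iff.mp hw).imp_right fun ⟨hA, hB⟩ => ⟨hA, ?_⟩)
  simp only [canCancel_cons_iff] at hB ⊢
  rcases hB with rfl | ⟨ha, rfl | ⟨hb, hB⟩⟩
  · exact Or.inr ⟨by simpa using hab.symm, Or.inl rfl⟩
  · exact Or.inl rfl
  · exact Or.inr ⟨hb, Or.inr ⟨ha, hB⟩⟩

/-! ### The normal form theorem -/

section NormalForm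

variable [DecidableEq V]

variable (G) in
open Classical in
noncomputable def pushLetter (x : V × Bool) (w : RaagWord V) : RaagWord V :=
  if CanCancel G x w then w.erase (letterInv x) else x :: w

lemma pushLetter_of_canCancel {x : V × Bool} {w : RaagWord V} (h : CanCancel G x w) :
    pushLetter G x w = w.erase (letterInv x) :=
  if_pos h

lemma pushLetter_of_not_canCancel {x : V × Bool} {w : RaagWord V} (h : ¬ CanCancel G x w) :
    pushLetter G x w = x :: w :=
  if_neg h

lemma CanCancel.exists_erase_eq {x : V × Bool} {w : RaagWord V} (h : CanCancel G x w) :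
    ∃ M S, w = M ++ letterInv x :: S ∧ w.erase (letterInv x) = M ++ S ∧
      ∀ l ∈ M, lettersCommute G l.1 x.1 := by
  induction w with
  | nil =>
    obtain ⟨M, S, h, -⟩ := h
    simp at h
  | cons y w ih =>
    by_cases hy : y = letterInv x
    · exact ⟨[], w, by simp [hy], by simp [hy], by simp⟩
    · obtain ⟨hyx, hw⟩ := (canCancel_cons_iff.mp h).resolve_left hy
      obtain ⟨M, S, rfl, herase, hM⟩ := ih hw
      refine ⟨y :: M, S, rfl, ?_, by simpa [hyx] using hM⟩
      rw [List.erase_cons_tail (by simpa using hy), herase, List.cons_append]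

lemma IsReduced.pushLetter {w : RaagWord V} (hw : IsReduced G w) (x : V × Bool) :
    IsReduced G (pushLetter G x w) := by
  by_cases h : CanCancel G x w
  · obtain ⟨M, S, rfl, herase, hM⟩ := h.exists_erase_eq
    rw [pushLetter_of_canCancel h, herase]
    intro hc
    rcases hc.append_cases with hc | hc | ⟨P, y, M₁, M₂, S', rfl, rfl, hy⟩
    · exact hw (hc.append_right _)
    · exact hw ((hc.append_left [letterInv x]).append_left _)
    · refine hw ⟨P, y, M₁ ++ letterInv x :: M₂, S', by simp, fun l hl => ?_⟩
      simp only [List.mem_append, List.mem_cons] at hl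
      rcases hl with hl | rfl | hl
      · exact hy l (by simp [hl])
      · exact (hM y (by simp)).symm
      · exact hy l (by simp [hl])
  · rw [pushLetter_of_not_canCancel h]
    exact fun hc => (hasCancellation_cons_iff.mp hc).elim h hw

lemma swapEquiv_pushLetter_pushLetter_letterInv {w : RaagWord V} (hw : IsReduced G w)
    (x : V × Bool) : SwapEquiv G (pushLetter G x (pushLetter G (letterInv x) w)) w := by
  by_cases h : CanCancel G (letterInv x) w
  · obtain ⟨M, S, rfl, herase, hM⟩ := h.exists_erase_eq
    simp only [letterInv_letterInv, letterInv_fst] at h hw herase hM ⊢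
    have hx : ¬ CanCancel G x (M ++ S) := by
      rintro ⟨M', S', hMS, hM'⟩
      rcases List.append_eq_append_cons_iff.mp hMS with ⟨T, rfl, rfl⟩ | ⟨T, rfl, rfl⟩
      · exact hw ⟨M', letterInv x, T, S, by simp,
          fun l hl => by simpa using hM l (by simp [hl])⟩
      · exact hw ⟨M, x, T, S', by simp, fun l hl => hM' l (by simp [hl])⟩
    rw [pushLetter_of_canCancel h, letterInv_letterInv, herase, pushLetter_of_not_canCancel hx]
    exact swapEquiv_cons_append S hM
  · have hx : CanCancel G x (letterInv x :: w) := ⟨[], w, rfl, by simp⟩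
    rw [pushLetter_of_not_canCancel h, pushLetter_of_canCancel hx, List.erase_cons_head]

lemma SwapStep.erase {w w' : RaagWord V} (h : SwapStep G w w') (c : V × Bool) :
    w.erase c = w'.erase c ∨ SwapStep G (w.erase c) (w'.erase c) := by
  obtain ⟨A, a, b, B, rfl, rfl, hab⟩ := h
  by_cases hA : c ∈ A
  · rw [List.erase_append_left _ hA, List.erase_append_left _ hA]
    exact Or.inr ⟨_, a, b, B, rfl, rfl, hab⟩
  rw [List.erase_append_right _ hA, List.erase_append_right _ hA]
  by_cases ha : a = c
  · subst ha
    by_cases hb : b = a <;> simp [hb]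
  by_cases hb : b = c
  · subst hb
    simp [ha]
  · exact Or.inr ⟨A, a, b, B.erase c, by simp [ha, hb], by simp [ha, hb], hab⟩

lemma SwapStep.pushLetter {w w' : RaagWord V} (h : SwapStep G w w') (x : V × Bool) :
    SwapEquiv G (pushLetter G x w) (pushLetter G x w') := by
  by_cases hc : CanCancel G x w
  · rw [pushLetter_of_canCancel hc, pushLetter_of_canCancel (h.canCancel hc)]
    rcases h.erase (letterInv x) with heq | hs
    · rw [heq]
    · exact .single hs
  · rw [pushLetter_of_not_canCancel hc,
      pushLetter_of_not_canCancel fun hc' => hc (h.symm.canCancel hc')]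
    exact .single (h.append_left [x])

lemma SwapEquiv.pushLetter {w w' : RaagWord V} (h : SwapEquiv G w w') (x : V × Bool) :
    SwapEquiv G (pushLetter G x w) (pushLetter G x w') := by
  induction h with
  | refl => rfl
  | tail _ hs ih => exact ih.trans (hs.pushLetter x)

lemma canCancel_pushLetter_iff {x y : V × Bool} (hne : x.1 ≠ y.1)
    (hyx : lettersCommute G y.1 x.1) {w : RaagWord V} :
    CanCancel G x (pushLetter G y w) ↔ CanCancel G x w := by
  by_cases hc : CanCancel G y w
  · obtain ⟨M, S, rfl, herase, -⟩ := hc.exists_erase_eq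
    rw [pushLetter_of_canCancel hc, herase, canCancel_append_iff, canCancel_append_iff,
      canCancel_cons_iff_of_ne (by simpa using hne.symm) (by simpa using hyx)]
  · rw [pushLetter_of_not_canCancel hc, canCancel_cons_iff_of_ne hne.symm hyx]

lemma swapEquiv_pushLetter_comm {x y : V × Bool} (hxy : G.Adj x.1 y.1) (w : RaagWord V) :
    SwapEquiv G (pushLetter G x (pushLetter G y w)) (pushLetter G y (pushLetter G x w)) := by
  have hx : ∀ w, CanCancel G x (pushLetter G y w) ↔ CanCancel G x w :=
    fun w => canCancel_pushLetter_iff hxy.ne (Or.inr hxy.symm)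
  have hy : ∀ w, CanCancel G y (pushLetter G x w) ↔ CanCancel G y w :=
    fun w => canCancel_pushLetter_iff hxy.ne.symm (Or.inr hxy)
  have hxy' : ¬ (x == letterInv y) = true := by simpa using fun h => hxy.ne (by simp [h])
  have hyx' : ¬ (y == letterInv x) = true := by simpa using fun h => hxy.ne (by simp [h])
  by_cases hcx : CanCancel G x w <;> by_cases hcy : CanCancel G y w
  · rw [pushLetter_of_canCancel ((hx w).mpr hcx), pushLetter_of_canCancel hcy,
      pushLetter_of_canCancel ((hy w).mpr hcy), pushLetter_of_canCancel hcx, List.erase_comm]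
  · rw [pushLetter_of_canCancel ((hx w).mpr hcx), pushLetter_of_not_canCancel hcy,
      pushLetter_of_not_canCancel (mt (hy w).mp hcy), pushLetter_of_canCancel hcx,
      List.erase_cons_tail hyx']
  · rw [pushLetter_of_not_canCancel (mt (hx w).mp hcx), pushLetter_of_canCancel hcy,
      pushLetter_of_canCancel ((hy w).mpr hcy), pushLetter_of_not_canCancel hcx,
      List.erase_cons_tail hxy']
  · rw [pushLetter_of_not_canCancel (mt (hx w).mp hcx), pushLetter_of_not_canCancel hcy,
      pushLetter_of_not_canCancel (mt (hy w).mp hcy), pushLetter_of_not_canCancel hcx]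
    exact .single ⟨[], x, y, w, rfl, rfl, Or.inr hxy⟩

variable (G) in
abbrev ReducedWord := {w : RaagWord V // IsReduced G w}

variable (G) in
instance ReducedWord.swapSetoid : Setoid (ReducedWord G) where
  r u v := SwapEquiv G u.1 v.1
  iseqv := ⟨fun u => SwapEquiv.refl u.1, SwapEquiv.symm, Relation.ReflTransGen.trans⟩

variable (G) in
abbrev NormalForm := Quotient (ReducedWord.swapSetoid G)

variable (G) in
noncomputable def NormalForm.pushLetter (x : V × Bool) : NormalForm G → NormalForm G :=
  Quotient.map (fun w => ⟨RaagWord.pushLetter G x w.1, w.2.pushLetter x⟩)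
    fun _ _ h => h.pushLetter x

variable (G) in
noncomputable def generatorPerm (v : V) : Equiv.Perm (NormalForm G) where
  toFun := NormalForm.pushLetter G (v, true)
  invFun := NormalForm.pushLetter G (v, false)
  left_inv := Quotient.ind fun w =>
    Quotient.sound (swapEquiv_pushLetter_pushLetter_letterInv w.2 (v, false))
  right_inv := Quotient.ind fun w =>
    Quotient.sound (swapEquiv_pushLetter_pushLetter_letterInv w.2 (v, true))

variable (G) in
noncomputable def normalFormAction : RAAG G →* Equiv.Perm (NormalForm G) :=
  PresentedGroup.toGroup (f := generatorPerm G) <| by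
    rintro _ ⟨u, v, huv, rfl⟩
    rw [map_commutatorElement, commutatorElement_eq_one_iff_commute]
    simp only [FreeGroup.lift_apply_of]
    exact Equiv.ext <| Quotient.ind fun w => Quotient.sound (swapEquiv_pushLetter_comm huv w.1)

lemma normalFormAction_letterValue (x : V × Bool) (q : NormalForm G) :
    normalFormAction G (letterValue G x) q = NormalForm.pushLetter G x q := by
  have hgen (v : V) : normalFormAction G (raagGen G v) = generatorPerm G v :=
    PresentedGroup.toGroup.of _
  rcases x with ⟨v, _ | _⟩
  · simp only [letterValue, Bool.false_eq_true, if_false, map_inv, hgen]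
    rfl
  · simp only [letterValue, if_true, hgen]
    rfl

lemma normalFormAction_wordValue {w : RaagWord V} (hw : IsReduced G w) :
    normalFormAction G (wordValue G w) ⟦⟨[], isReduced_nil⟩⟧ = ⟦⟨w, hw⟩⟧ := by
  induction w with
  | nil => simp
  | cons x w ih =>
    have hw' : IsReduced G w := fun h => hw (hasCancellation_cons_iff.mpr (Or.inr h))
    have hx : ¬ CanCancel G x w := fun h => hw (hasCancellation_cons_iff.mpr (Or.inl h))
    rw [wordValue_cons, map_mul, Equiv.Perm.mul_apply, ih hw', normalFormAction_letterValue]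
    exact Quotient.sound (show SwapEquiv G (pushLetter G x w) (x :: w) by
      rw [pushLetter_of_not_canCancel hx])

end NormalForm

theorem swapEquiv_of_wordValue_eq {w w' : RaagWord V} (hw : IsReduced G w)
    (hw' : IsReduced G w') (h : wordValue G w = wordValue G w') : SwapEquiv G w w' := by
  classical
  have hact := normalFormAction_wordValue hw
  rw [h, normalFormAction_wordValue hw'] at hact
  exact Quotient.exact hact.symm

variable (G) in
lemma exists_isReduced (w : RaagWord V) :
    ∃ r, IsReduced G r ∧ r.length ≤ w.length ∧ wordValue G r = wordValue G w := by
  by_cases h : HasCancellation G w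
  · obtain ⟨w', hlen, -, hval⟩ := h.exists_shorter
    obtain ⟨r, hr, hrlen, hrval⟩ := exists_isReduced w'
    exact ⟨r, hr, by omega, hrval.trans hval⟩
  · exact ⟨w, h, le_rfl, rfl⟩
termination_by w.length

lemma IsReduced.length_le {w w' : RaagWord V} (hw : IsReduced G w)
    (h : wordValue G w' = wordValue G w) : w.length ≤ w'.length := by
  obtain ⟨r, hr, hlen, hval⟩ := exists_isReduced G w'
  rw [(swapEquiv_of_wordValue_eq hw hr (hval.trans h).symm).perm.length_eq]
  exact hlen

-- Reduced words are the shortest words with their value, and swaps keep length and value.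
lemma IsReduced.swapEquiv {w w' : RaagWord V} (hw : IsReduced G w) (h : SwapEquiv G w w') :
    IsReduced G w' := by
  intro hc
  obtain ⟨v, hlen, -, hval⟩ := hc.exists_shorter
  have := hw.length_le (hval.trans h.wordValue_eq.symm)
  have := h.perm.length_eq
  omega

lemma HasCancellation.swapEquiv {w w' : RaagWord V} (h : HasCancellation G w)
    (hs : SwapEquiv G w w') : HasCancellation G w' := by
  by_contra h'
  exact IsReduced.swapEquiv h' hs.symm h

/-! ### Cyclic reduction and conjugacy -/

lemma isConj_wordValue_of_isRotated {w w' : RaagWord V} (h : w ~r w') :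
    IsConj (wordValue G w) (wordValue G w') := by
  obtain ⟨u, v, rfl, rfl⟩ := h.exists_eq_append
  exact isConj_iff.mpr ⟨(wordValue G u)⁻¹, by simp⟩

variable (G) in
def CyclicallyReducible (w : RaagWord V) : Prop := ∃ r, w ~r r ∧ HasCancellation G r

lemma HasCancellation.cyclicallyReducible {w : RaagWord V} (h : HasCancellation G w) :
    CyclicallyReducible G w :=
  ⟨w, .refl w, h⟩

lemma CyclicallyReducible.isRotated {w w' : RaagWord V} (h : CyclicallyReducible G w)
    (hw : w ~r w') : CyclicallyReducible G w' :=
  let ⟨r, hr, hc⟩ := h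
  ⟨r, hw.symm.trans hr, hc⟩

-- A swap straddling the cut of a rotation: some rotation keeping `a, b` adjacent still has a
-- cancellation.
lemma HasCancellation.cons_append_singleton {a b : V × Bool} {X : RaagWord V}
    (h : HasCancellation G (b :: (X ++ [a]))) :
    HasCancellation G (a :: b :: X) ∨ HasCancellation G (X ++ [a, b]) := by
  rcases hasCancellation_cons_iff.mp h with ⟨M, S, hXa, hM⟩ | h
  · left
    rcases List.append_eq_append_cons_iff.mp hXa with ⟨T, rfl, -⟩ | ⟨T, -, hT⟩
    · exact (hasCancellation_cons_iff.mpr (Or.inl ⟨M, T, rfl, hM⟩)).append_left [a]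
    · rcases T with _ | ⟨t, T⟩ <;>
        simp only [List.nil_append, List.cons.injEq, List.cons_append, List.nil_eq,
          List.append_eq_nil_iff, reduceCtorEq, and_false] at hT
      exact ⟨[], a, [], X, by simp [hT.1], by simp⟩
  · exact Or.inr (by simpa using h.append_right [b])

lemma CyclicallyReducible.swapStep {w w' : RaagWord V} (h : CyclicallyReducible G w)
    (hs : SwapStep G w w') : CyclicallyReducible G w' := by
  obtain ⟨A, a, b, B, rfl, rfl, hab⟩ := hs
  suffices ∀ X, CyclicallyReducible G (a :: b :: X) → CyclicallyReducible G (b :: a :: X) from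
    (this (B ++ A) (h.isRotated List.isRotated_append)).isRotated
      (List.isRotated_append (l := b :: a :: B) (l' := A))
  rintro X ⟨r, hr, hc⟩
  have hswap (C D : RaagWord V) : SwapEquiv G (C ++ a :: b :: D) (C ++ b :: a :: D) :=
    .single ⟨C, a, b, D, rfl, rfl, hab⟩
  obtain ⟨u, v, huv, rfl⟩ := hr.exists_eq_append
  rcases u with _ | ⟨u₁, _ | ⟨u₂, u⟩⟩
  · rw [List.nil_append] at huv
    rw [← huv, List.append_nil] at hc
    exact (hc.swapEquiv (hswap [] X)).cyclicallyReducible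
  · obtain ⟨rfl, rfl⟩ := List.cons_eq_cons.mp huv
    rcases hc.cons_append_singleton with hc | hc
    · exact (hc.swapEquiv (hswap [] X)).cyclicallyReducible
    · exact ⟨X ++ [b, a], List.isRotated_append (l := [b, a]),
        by simpa using hc.swapEquiv (hswap X [])⟩
  · simp only [List.cons_append, List.cons.injEq] at huv
    obtain ⟨rfl, rfl, rfl⟩ := huv
    exact ⟨v ++ b :: a :: u, by simpa using List.isRotated_append (l := b :: a :: u) (l' := v),
      hc.swapEquiv (hswap v u)⟩

lemma cyclicallyReducible_invWord_append {e : RaagWord V} (he : e ≠ []) (u : RaagWord V) :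
    CyclicallyReducible G (invWord e ++ (u ++ e)) := by
  obtain ⟨f, t, rfl⟩ := (List.eq_nil_or_concat' e).resolve_left he
  refine ⟨t :: letterInv t :: (invWord f ++ (u ++ f)), ?_, ⟨[], t, [], _, rfl, by simp⟩⟩
  simpa using List.isRotated_concat t (letterInv t :: (invWord f ++ (u ++ f)))

variable (G) in
def CyclicSwapEquiv : RaagWord V → RaagWord V → Prop :=
  Relation.ReflTransGen fun u v => SwapStep G u v ∨ u ~r v

lemma SwapEquiv.cyclicSwapEquiv {u v : RaagWord V} (h : SwapEquiv G u v) :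
    CyclicSwapEquiv G u v :=
  Relation.ReflTransGen.mono (fun _ _ => Or.inl) u v h

lemma CyclicSwapEquiv.perm {u v : RaagWord V} (h : CyclicSwapEquiv G u v) : u.Perm v := by
  induction h with
  | refl => rfl
  | tail _ hs ih => exact ih.trans (hs.elim SwapStep.perm List.IsRotated.perm)

lemma CyclicSwapEquiv.cyclicallyReducible_iff {u v : RaagWord V} (h : CyclicSwapEquiv G u v) :
    CyclicallyReducible G u ↔ CyclicallyReducible G v := by
  induction h with
  | refl => rfl
  | tail _ hs ih =>
    refine ih.trans ?_
    rcases hs with hs | hr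
    · exact ⟨(·.swapStep hs), (·.swapStep hs.symm)⟩
    · exact ⟨(·.isRotated hr), (·.isRotated hr.symm)⟩

lemma exists_isConj_not_cyclicallyReducible (w : RaagWord V) :
    ∃ u, ¬ CyclicallyReducible G u ∧ (∀ p ∈ u, p ∈ w) ∧
      IsConj (wordValue G w) (wordValue G u) := by
  by_cases h : CyclicallyReducible G w
  · obtain ⟨r, hr, hc⟩ := h
    obtain ⟨v, hlen, hmem, hval⟩ := hc.exists_shorter
    have : v.length < w.length := hr.perm.length_eq ▸ hlen
    obtain ⟨u, hu, humem, hconj⟩ := exists_isConj_not_cyclicallyReducible v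
    refine ⟨u, hu, fun p hp => hr.mem_iff.mpr (hmem p (humem p hp)), ?_⟩
    exact (isConj_wordValue_of_isRotated hr).trans (hval ▸ hconj)
  · exact ⟨w, h, fun _ => id, IsConj.refl _⟩
termination_by w.length

variable (G) in
def CanShortenConjugator (d u : RaagWord V) : Prop :=
  ∃ d' u', d'.length < d.length ∧ CyclicSwapEquiv G u u' ∧
    wordValue G (invWord d' ++ (u' ++ d')) = wordValue G (invWord d ++ (u ++ d))

lemma CanShortenConjugator.of_hasCancellation {d : RaagWord V} (hd : HasCancellation G d)
    (u : RaagWord V) : CanShortenConjugator G d u := by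
  obtain ⟨d', hlen, -, hval⟩ := hd.exists_shorter
  exact ⟨d', u, hlen, .refl, by simp [hval]⟩

lemma canShortenConjugator_of_swapEquiv_append_singleton {x : V × Bool} {d d' u u₀ : RaagWord V}
    (hd : SwapEquiv G d (letterInv x :: d')) (hu : SwapEquiv G u (u₀ ++ [x])) :
    CanShortenConjugator G d u := by
  refine ⟨d', x :: u₀, by simp [hd.perm.length_eq],
    hu.cyclicSwapEquiv.tail (Or.inr (List.isRotated_concat x u₀)), ?_⟩
  simp [hd.wordValue_eq, hu.wordValue_eq]
  group

lemma canShortenConjugator_of_swapEquiv_cons {x : V × Bool} {d d' u u₀ : RaagWord V}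
    (hd : SwapEquiv G d (letterInv x :: d')) (hu : SwapEquiv G u (letterInv x :: u₀)) :
    CanShortenConjugator G d u := by
  refine ⟨d', u₀ ++ [letterInv x], by simp [hd.perm.length_eq],
    hu.cyclicSwapEquiv.tail (Or.inr (List.isRotated_concat _ u₀).symm), ?_⟩
  simp [hd.wordValue_eq, hu.wordValue_eq]
  group

lemma canShortenConjugator_of_commute {x : V × Bool} {d d' u : RaagWord V}
    (hd : SwapEquiv G d (letterInv x :: d')) (hu : ∀ l ∈ u, lettersCommute G l.1 x.1) :
    CanShortenConjugator G d u := by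
  refine ⟨d', u, by simp [hd.perm.length_eq], .refl, ?_⟩
  simp only [wordValue_append, wordValue_invWord, hd.wordValue_eq, wordValue_cons,
    letterValue_letterInv, mul_inv_rev, inv_inv, mul_assoc]
  rw [← mul_assoc (letterValue G x), ← (commute_wordValue_letterValue hu).eq, mul_assoc,
    mul_inv_cancel_left]

lemma canShortenConjugator_of_hasCancellation_conj {d u : RaagWord V}
    (hu : ¬ CyclicallyReducible G u) (h : HasCancellation G (invWord d ++ (u ++ d))) :
    CanShortenConjugator G d u := by
  rcases h.append_cases with hd | hud | ⟨P, x, M₁, M₂, S, hd, hud, hM⟩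
  · exact .of_hasCancellation hd.of_invWord u
  · rcases hud.append_cases with hu' | hd | ⟨P, x, M₁, M₂, S, rfl, rfl, hM⟩
    · exact absurd hu'.cyclicallyReducible hu
    · exact .of_hasCancellation hd u
    · refine canShortenConjugator_of_swapEquiv_append_singleton (u₀ := P ++ M₁)
        (swapEquiv_cons_append S fun l hl => by simpa using hM l (by simp [hl])).symm ?_
      simpa using
        (swapEquiv_cons_append (A := M₁) [] fun l hl => hM l (by simp [hl])).append_left P
  · obtain rfl : d = invWord M₁ ++ letterInv x :: invWord P := by
      rw [← invWord_invWord d, hd]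
      simp
    have hd' := (swapEquiv_cons_append (x := letterInv x) (A := invWord M₁) (invWord P)
      fun l hl => by
      simpa using hM (letterInv l) (by simp [mem_invWord.mp hl])).symm
    rcases List.append_eq_append_cons_iff.mp hud with ⟨T, rfl, -⟩ | ⟨T, rfl, -⟩
    · exact canShortenConjugator_of_swapEquiv_cons hd'
        (swapEquiv_cons_append T fun l hl => by simpa using hM l (by simp [hl])).symm
    · exact canShortenConjugator_of_commute hd' fun l hl => hM l (by simp [hl])

lemma exists_isReduced_conjugate (d : RaagWord V) {u : RaagWord V}
    (hu : ¬ CyclicallyReducible G u) :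
    ∃ e u', CyclicSwapEquiv G u u' ∧ IsReduced G (invWord e ++ (u' ++ e)) ∧
      wordValue G (invWord e ++ (u' ++ e)) = wordValue G (invWord d ++ (u ++ d)) := by
  by_cases h : HasCancellation G (invWord d ++ (u ++ d))
  · obtain ⟨d', u', hlen, hequiv, hval⟩ := canShortenConjugator_of_hasCancellation_conj hu h
    obtain ⟨e, u'', hequiv', hred, hval'⟩ :=
      exists_isReduced_conjugate d' (hequiv.cyclicallyReducible_iff.not.mp hu)
    exact ⟨e, u'', hequiv.trans hequiv', hred, hval'.trans hval⟩
  · exact ⟨d, u, .refl, h, rfl⟩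
termination_by d.length

theorem cyclicSwapEquiv_of_isConj {u w : RaagWord V} (hu : ¬ CyclicallyReducible G u)
    (hw : ¬ CyclicallyReducible G w) (h : IsConj (wordValue G u) (wordValue G w)) :
    CyclicSwapEquiv G u w := by
  obtain ⟨c, hc⟩ := isConj_iff.mp h
  obtain ⟨d, hd⟩ := exists_wordValue_eq (G := G) c⁻¹
  obtain ⟨e, u', hequiv, hred, hval⟩ := exists_isReduced_conjugate d hu
  have hswap : SwapEquiv G w (invWord e ++ (u' ++ e)) :=
    swapEquiv_of_wordValue_eq (fun h => hw h.cyclicallyReducible) hred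
      (by rw [hval, ← hc]; simp [hd, mul_assoc])
  obtain rfl : e = [] := by
    by_contra he
    exact hw (hswap.symm.cyclicSwapEquiv.cyclicallyReducible_iff.mp
      (cyclicallyReducible_invWord_append he u'))
  simp only [invWord_nil, List.nil_append, List.append_nil] at hswap
  exact hequiv.trans hswap.symm.cyclicSwapEquiv

/-! ### Positional reductions -/

lemma HasCancellation.hasReduction {w : RaagWord V} (h : HasCancellation G w) :
    HasReduction G w := by
  obtain ⟨P, x, M, S, hw, hM⟩ := h
  have hlen : w.length = P.length + M.length + S.length + 2 := by simp [hw]; omega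
  have hx : w[P.length] = x := List.getElem_of_eq_append_cons hw _ rfl
  have hx' : w[P.length + 1 + M.length] = letterInv x :=
    List.getElem_of_eq_append_cons (A := P ++ x :: M) (B := S) (by simp [hw]) _ (by simp; omega)
  refine ⟨P.length, P.length + 1 + M.length, by omega, by omega, by omega,
    by simp [hx, hx'], by simp [hx, hx', letterInv], fun k hk hik hkj => ?_⟩
  simp only [List.get_eq_getElem, hx]
  exact hM _ (List.getElem_mem_of_eq_append (A := P ++ [x]) (B := letterInv x :: S)
    (by simp [hw]) hk (by simp; omega) (by simp; omega))

lemma hasCyclicReduction_of_eq {w A C B : RaagWord V} {x : V × Bool}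
    (hw : w = A ++ letterInv x :: (C ++ x :: B)) (hA : ∀ l ∈ A, lettersCommute G l.1 x.1)
    (hB : ∀ l ∈ B, lettersCommute G l.1 x.1) : HasCyclicReduction G w := by
  have hlen : w.length = A.length + C.length + B.length + 2 := by simp [hw]; omega
  have hx : w[A.length] = letterInv x := List.getElem_of_eq_append_cons hw _ rfl
  have hx' : w[A.length + 1 + C.length] = x :=
    List.getElem_of_eq_append_cons (A := A ++ letterInv x :: C) (B := B) (by simp [hw]) _
      (by simp; omega)
  refine ⟨A.length, A.length + 1 + C.length, by omega, by omega, by omega,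
    by simp [hx, hx'], by simp [hx, hx', letterInv], fun k hk hout => ?_⟩
  simp only [List.get_eq_getElem, hx, letterInv_fst]
  rcases hout with hk' | hk'
  · exact hA _
      (List.getElem_mem_of_eq_append (A := []) (by simpa using hw) hk (by simp) (by simpa))
  · exact hB _ (List.getElem_mem_of_eq_append (A := A ++ letterInv x :: (C ++ [x])) (B := [])
      (by simp [hw]) hk (by simp; omega) (by simp; omega))

lemma _root_.CyclicallyReduced.not_cyclicallyReducible {w : RaagWord V}
    (hw : CyclicallyReduced G w) : ¬ CyclicallyReducible G w := by
  rintro ⟨r, hr, hc⟩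
  obtain ⟨u, v, rfl, rfl⟩ := hr.exists_eq_append
  rcases hc.append_cases with hv | hu | ⟨P, x, M₁, M₂, S, rfl, rfl, hM⟩
  · exact hw.1 (hv.append_left u).hasReduction
  · exact hw.1 (hu.append_right v).hasReduction
  · exact hw.2 (hasCyclicReduction_of_eq (A := M₂) (C := S ++ P) (B := M₁) (by simp)
      (fun l hl => hM l (by simp [hl])) (fun l hl => hM l (by simp [hl])))

end RaagWord

theorem cyclicallyReduced_conjugate_mem_special_subgroup_general
    {V : Type*} (G : SimpleGraph V) (Sg : Set V)
    (x y : RAAG G) (hx : x ∈ (raagSub G Sg).map (MulAut.conj y⁻¹).toMonoidHom)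
    (w : RaagWord V) (hred : CyclicallyReduced G w)
    (hconj : ∃ z : RAAG G, wordValue G w = z⁻¹ * x * z) :
    (∀ p ∈ w, p.1 ∈ Sg) ∧ wordValue G w ∈ raagSub G Sg := by
  obtain ⟨g, hg, rfl⟩ := Subgroup.mem_map.mp hx
  obtain ⟨w₀, hw₀, rfl⟩ := RaagWord.exists_word_of_mem_raagSub hg
  obtain ⟨u, hu, huw₀, hw₀u⟩ := RaagWord.exists_isConj_not_cyclicallyReducible (G := G) w₀
  have hw₀w : IsConj (wordValue G w₀) (wordValue G w) := by
    obtain ⟨z, hz⟩ := hconj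
    exact isConj_iff.mpr ⟨(y * z)⁻¹, by simp [hz, mul_assoc]⟩
  have hequiv :=
    RaagWord.cyclicSwapEquiv_of_isConj hu hred.not_cyclicallyReducible (hw₀u.symm.trans hw₀w)
  have hmem : ∀ p ∈ w, p.1 ∈ Sg := fun p hp => hw₀ p (huw₀ p (hequiv.perm.mem_iff.mpr hp))
  exact ⟨hmem, RaagWord.wordValue_mem_raagSub hmem⟩

theorem cyclicallyReduced_conjugate_mem_special_subgroup
    {V : Type*} [Fintype V] (G : SimpleGraph V) (Sg : Set V)
    (x y : RAAG G) (hx : x ∈ (raagSub G Sg).map (MulAut.conj y⁻¹).toMonoidHom)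
    (w : RaagWord V) (hred : CyclicallyReduced G w)
    (hconj : ∃ z : RAAG G, wordValue G w = z⁻¹ * x * z) :
    (∀ p ∈ w, p.1 ∈ Sg) ∧ wordValue G w ∈ raagSub G Sg :=
  cyclicallyReduced_conjugate_mem_special_subgroup_general G Sg x y hx w hred hconj
end

section
/- Let Σ be a subset of the vertex set of a finite simplicial graph Γ. If x ∈ A_{st(Σ)} and x is conjugate in A_Γ to an element of A_Σ, then x ∈ A_Σ. (The only elements of A_{st(Σ)} = A_Σ × A_{lk(Σ)} conjugate to elements of A_Σ are the elements of A_Σ.) -/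
open scoped commutatorElement

/-! The retraction `ρ_Δ : A_Γ → A_Δ` killing the generators outside `Δ` is a homomorphism that is
the identity on `A_Δ`. Since `A_Σ` and `A_{lk Σ}` commute, every `x ∈ A_{st Σ}` is a product
`p * q` with `p ∈ A_Σ` and `q ∈ A_{lk Σ}`, and then `ρ_{lk Σ} x = q`. If `x` is conjugate into
`A_Σ`, then `ρ_{lk Σ} x` is conjugate to `ρ_{lk Σ}` of an element of `A_Σ`, which is `1`; hence
`q = 1` and `x = p ∈ A_Σ`. -/

section RAAG

variable {V : Type*} (G : SimpleGraph V)

lemma raagGen_commute {u v : V} (h : G.Adj u v) : Commute (raagGen G u) (raagGen G v) := by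
  rw [← commutatorElement_eq_one_iff_commute]
  have hrel : ⁅FreeGroup.of u, FreeGroup.of v⁆ ∈ Subgroup.normalClosure (raagRels G) :=
    Subgroup.subset_normalClosure ⟨u, v, h, rfl⟩
  have hmk : PresentedGroup.mk (raagRels G) ⁅FreeGroup.of u, FreeGroup.of v⁆ = 1 :=
    (QuotientGroup.eq_one_iff _).2 hrel
  simpa [raagGen, PresentedGroup.of, map_commutatorElement] using hmk

lemma disjoint_lkSet (Sg : Set V) : Disjoint Sg (lkSet G Sg) :=
  Set.disjoint_left.2 fun v hv hlk => G.irrefl (hlk v hv)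

lemma raagSub_le_centralizer_raagSub_lkSet (Sg : Set V) :
    raagSub G Sg ≤ Subgroup.centralizer (raagSub G (lkSet G Sg)) := by
  rw [raagSub, raagSub, Subgroup.centralizer_closure, Subgroup.closure_le]
  rintro _ ⟨u, hu, rfl⟩ _ ⟨w, hw, rfl⟩
  exact (raagGen_commute G (hw u hu)).symm

lemma raagSub_stSet_eq_sup (Sg : Set V) :
    raagSub G (stSet G Sg) = raagSub G Sg ⊔ raagSub G (lkSet G Sg) := by
  rw [raagSub, stSet, Set.image_union, Subgroup.closure_union, raagSub, raagSub]

lemma mem_raagSub_stSet_iff (Sg : Set V) {x : RAAG G} :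
    x ∈ raagSub G (stSet G Sg) ↔
      ∃ p ∈ raagSub G Sg, ∃ q ∈ raagSub G (lkSet G Sg), p * q = x := by
  rw [← SetLike.mem_coe, raagSub_stSet_eq_sup, Subgroup.coe_mul_of_left_le_normalizer_right _ _
    ((raagSub_le_centralizer_raagSub_lkSet G Sg).trans (Subgroup.centralizer_le_normalizer _)),
    Set.mem_mul]
  simp only [SetLike.mem_coe]

open Classical in
noncomputable def raagRetraction (Δ : Set V) : RAAG G →* RAAG G :=
  PresentedGroup.toGroup (f := fun v => if v ∈ Δ then raagGen G v else 1) <| by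
    rintro _ ⟨u, v, huv, rfl⟩
    rw [map_commutatorElement, commutatorElement_eq_one_iff_commute]
    simp only [FreeGroup.lift_apply_of]
    split_ifs
    · exact raagGen_commute G huv
    all_goals simp

lemma raagRetraction_raagGen_of_mem {Δ : Set V} {v : V} (hv : v ∈ Δ) :
    raagRetraction G Δ (raagGen G v) = raagGen G v := by
  simp [raagRetraction, raagGen, hv]

lemma raagRetraction_raagGen_of_notMem {Δ : Set V} {v : V} (hv : v ∉ Δ) :
    raagRetraction G Δ (raagGen G v) = 1 := by
  simp [raagRetraction, raagGen, hv]

lemma raagRetraction_apply_of_mem {Δ : Set V} {x : RAAG G} (hx : x ∈ raagSub G Δ) :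
    raagRetraction G Δ x = x := by
  suffices raagSub G Δ ≤ (raagRetraction G Δ).eqLocus (MonoidHom.id _) from this hx
  rw [raagSub, Subgroup.closure_le]
  rintro _ ⟨v, hv, rfl⟩
  exact raagRetraction_raagGen_of_mem G hv

lemma raagSub_le_ker_raagRetraction {Δ Θ : Set V} (h : Disjoint Θ Δ) :
    raagSub G Θ ≤ (raagRetraction G Δ).ker := by
  rw [raagSub, Subgroup.closure_le]
  rintro _ ⟨v, hv, rfl⟩
  exact raagRetraction_raagGen_of_notMem G (Set.disjoint_left.1 h hv)

lemma mem_raagSub_of_mem_raagSub_stSet_of_mem_ker {Sg : Set V} {x : RAAG G}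
    (hx : x ∈ raagSub G (stSet G Sg)) (hker : x ∈ (raagRetraction G (lkSet G Sg)).ker) :
    x ∈ raagSub G Sg := by
  obtain ⟨p, hp, q, hq, rfl⟩ := (mem_raagSub_stSet_iff G Sg).1 hx
  have hq_one : q = 1 := by
    rwa [MonoidHom.mem_ker, map_mul, raagSub_le_ker_raagRetraction G (disjoint_lkSet G Sg) hp,
      raagRetraction_apply_of_mem G hq, one_mul] at hker
  rwa [hq_one, mul_one]

end RAAG

theorem mem_special_subgroup_of_mem_star_and_conjugate_general
    {V : Type*} (G : SimpleGraph V) (Sg : Set V) (x : RAAG G)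
    (hx : x ∈ raagSub G (stSet G Sg))
    (hconj : ∃ z : RAAG G, ∃ a ∈ raagSub G Sg, x = z⁻¹ * a * z) :
    x ∈ raagSub G Sg := by
  obtain ⟨z, a, ha, rfl⟩ := hconj
  refine mem_raagSub_of_mem_raagSub_stSet_of_mem_ker G hx ?_
  simpa using (raagRetraction G (lkSet G Sg)).normal_ker.conj_mem a
    (raagSub_le_ker_raagRetraction G (disjoint_lkSet G Sg) ha) z⁻¹

theorem mem_special_subgroup_of_mem_star_and_conjugate
    {V : Type*} [Fintype V] (G : SimpleGraph V) (Sg : Set V) (x : RAAG G)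
    (hx : x ∈ raagSub G (stSet G Sg))
    (hconj : ∃ z : RAAG G, ∃ a ∈ raagSub G Sg, x = z⁻¹ * a * z) :
    x ∈ raagSub G Sg :=
  mem_special_subgroup_of_mem_star_and_conjugate_general G Sg x hx hconj
end

section
/- Let Γ be a finite simplicial graph, Δ a nonempty subset of its vertex set, and v, w vertices with lk(w) ⊆ st(v). If w ∈ ŝt(Δ), then v ∈ ŝt(Δ). -/
section

variable {V : Type*} (G : SimpleGraph V)

theorem mem_lkSet_singleton {w u : V} : u ∈ lkSet G {w} ↔ G.Adj w u := by
  simp [lkSet]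

theorem mem_stSet_singleton {v u : V} : u ∈ stSet G {v} ↔ u = v ∨ G.Adj v u := by
  simp [stSet, lkSet]

theorem subset_lkSet_lkSet (Δ : Set V) : Δ ⊆ lkSet G (lkSet G Δ) :=
  fun _ hx _ hu => (hu _ hx).symm

theorem estSet_eq_stSet_lkSet (Δ : Set V) : estSet G Δ = stSet G (lkSet G Δ) :=
  rfl

theorem stSet_subset_estSet (Δ : Set V) : stSet G Δ ⊆ estSet G Δ :=
  Set.union_subset (subset_lkSet_lkSet G Δ |>.trans Set.subset_union_right)
    Set.subset_union_left

theorem mem_stSet_of_mem_lkSet {v w : V} (hsub : lkSet G {w} ⊆ stSet G {v}) {S : Set V}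
    (hw : w ∈ lkSet G S) : v ∈ stSet G S := by
  by_cases hv : v ∈ S
  · exact Or.inl hv
  · refine Or.inr fun u hu => ?_
    rcases (mem_stSet_singleton G).1 (hsub ((mem_lkSet_singleton G).2 (hw u hu).symm)) with
      rfl | hvu
    · exact absurd hu hv
    · exact hvu.symm

end

theorem mem_est_of_mem_est_general {V : Type*} (G : SimpleGraph V)
    (Δ : Set V) (v w : V)
    (hsub : lkSet G {w} ⊆ stSet G {v}) (hw : w ∈ estSet G Δ) :
    v ∈ estSet G Δ := by
  rcases hw with hw | hw
  · exact stSet_subset_estSet G Δ (mem_stSet_of_mem_lkSet G hsub hw)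
  · rw [estSet_eq_stSet_lkSet]
    exact mem_stSet_of_mem_lkSet G hsub hw

theorem mem_est_of_mem_est {V : Type*} [Fintype V] (G : SimpleGraph V)
    (Δ : Set V) (hΔ : Δ.Nonempty) (v w : V)
    (hsub : lkSet G {w} ⊆ stSet G {v}) (hw : w ∈ estSet G Δ) :
    v ∈ estSet G Δ :=
  mem_est_of_mem_est_general G Δ v w hsub hw
end

section
/- Let Γ be a finite simplicial graph and v a vertex. Let Θ be a connected component of the induced subgraph of Γ on V ∖ st(v), and let Σ = V ∖ (Θ ∪ st(v)). Let Δ be a nonempty subset of V such that lk(Δ) intersects both Θ and Σ nontrivially. Then v ∈ lk(Δ). -/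
/-!
A vertex `d ∈ Δ` is adjacent to some `a ∈ Θ` and to some `b ∈ Σ`. If `d` lay outside `st(v)`,
the path `a – d – b` would run inside `V ∖ st(v)`, putting `b` in the component `Θ`. So `d ∈ st(v)`,
and `d ≠ v` because `d` is adjacent to `a ∉ st(v)`; hence `d` is a neighbour of `v`.
-/

theorem mem_stSet_singleton_iff {V : Type*} {G : SimpleGraph V} {v u : V} :
    u ∈ stSet G {v} ↔ u = v ∨ G.Adj v u := by
  simp [stSet, lkSet]

theorem mem_image_reachable_of_adj {V : Type*} {G : SimpleGraph V} {S : Set V} {x : S}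
    {u w : V} (hu : u ∈ Subtype.val '' {y : S | (G.induce S).Reachable x y}) (hw : w ∈ S)
    (huw : G.Adj u w) :
    w ∈ Subtype.val '' {y : S | (G.induce S).Reachable x y} := by
  obtain ⟨u, hxu, rfl⟩ := hu
  exact ⟨⟨w, hw⟩, hxu.trans (SimpleGraph.Adj.reachable (by simpa using huw)), rfl⟩

theorem mem_lk_of_lk_meets_both_components_general {V : Type*} (G : SimpleGraph V)
    (v : V) (S : Set V) (hS : S = (stSet G {v})ᶜ)
    (x : ↥S) (Θ : Set V)
    (hΘ : Θ = Subtype.val '' {u : ↥S | (SimpleGraph.induce S G).Reachable x u})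
    (Sg : Set V) (hSg : Sg = (Θ ∪ stSet G {v})ᶜ)
    (Δ : Set V)
    (h1 : (lkSet G Δ ∩ Θ).Nonempty) (h2 : (lkSet G Δ ∩ Sg).Nonempty) :
    v ∈ lkSet G Δ := by
  subst hS hSg hΘ
  obtain ⟨a, haΔ, haΘ⟩ := h1
  obtain ⟨b, hbΔ, hb⟩ := h2
  obtain ⟨hbΘ, hb_st⟩ := not_or.1 hb
  have ha_st : a ∉ stSet G {v} := by
    obtain ⟨a, -, rfl⟩ := haΘ
    exact a.2
  intro d hd
  have hd_st : d ∈ stSet G {v} := by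
    by_contra hd_st
    have hdΘ := mem_image_reachable_of_adj haΘ hd_st (haΔ d hd).symm
    exact hbΘ (mem_image_reachable_of_adj hdΘ hb_st (hbΔ d hd))
  have hd_ne : d ≠ v := by
    rintro rfl
    exact ha_st (mem_stSet_singleton_iff.2 (Or.inr (haΔ d hd)))
  exact ((mem_stSet_singleton_iff.1 hd_st).resolve_left hd_ne).symm

theorem mem_lk_of_lk_meets_both_components {V : Type*} [Fintype V] (G : SimpleGraph V)
    (v : V) (S : Set V) (hS : S = (stSet G {v})ᶜ)
    (x : ↥S) (Θ : Set V)
    (hΘ : Θ = Subtype.val '' {u : ↥S | (SimpleGraph.induce S G).Reachable x u})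
    (Sg : Set V) (hSg : Sg = (Θ ∪ stSet G {v})ᶜ)
    (Δ : Set V) (hΔ : Δ.Nonempty)
    (h1 : (lkSet G Δ ∩ Θ).Nonempty) (h2 : (lkSet G Δ ∩ Sg).Nonempty) :
    v ∈ lkSet G Δ :=
  mem_lk_of_lk_meets_both_components_general G v S hS x Θ hΘ Sg hSg Δ h1 h2
end

section
/- Let Γ be a finite simplicial graph with vertex set V and let L be a collection of subsets of V such that: (a) L is closed under pairwise intersection; (b) if Δ, Σ ∈ L and lk(Δ ∩ Σ) ⊆ st(Δ), then Δ ∪ Σ ∈ L; (c) every connected component of Γ containing at least one edge belongs to L; and V ∈ L. Suppose Γ' ∈ L is maximal with respect to inclusion among proper members of L. Then either Γ' is a union of connected components of Γ, or there exists a connected component C of Γ such that V ∖ C ⊆ Γ' and Γ' ∩ C is a nonempty proper subset of C. -/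
/-!
If `Γ'` is not a union of components, pick `x ∈ Γ'` whose component `C` leaves `Γ'`. Then `C`
contains an edge, so `C ∈ L`, and every vertex of `lk(C ∩ Γ')` is adjacent to `x`, hence lies in
`C ⊆ st(C)`. So `C ∪ Γ' ∈ L` strictly contains `Γ'`, and maximality forces `C ∪ Γ' = V`.
-/

namespace SimpleGraph

variable {V : Type*} {G : SimpleGraph V} {x y : V}

lemma Reachable.exists_adj_of_ne (h : G.Reachable x y) (hne : x ≠ y) : ∃ z, G.Adj x z := by
  obtain ⟨p⟩ := h
  cases p with
  | nil => exact absurd rfl hne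
  | cons hadj _ => exact ⟨_, hadj⟩

end SimpleGraph

lemma lkSet_inter_subset_stSet_component {V : Type*} (G : SimpleGraph V) {Sg : Set V} {x : V}
    (hx : x ∈ Sg) : lkSet G ({u | G.Reachable x u} ∩ Sg) ⊆ stSet G {u | G.Reachable x u} :=
  fun _ hu => Or.inl (hu x ⟨.refl x, hx⟩).reachable

lemma component_union_eq_univ_of_maximal {V : Type*} (G : SimpleGraph V) {L : Set (Set V)}
    (hb : ∀ Δ ∈ L, ∀ Sg ∈ L, lkSet G (Δ ∩ Sg) ⊆ stSet G Δ → Δ ∪ Sg ∈ L)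
    (hc : ∀ x y : V, G.Adj x y → {u : V | G.Reachable x u} ∈ L)
    {Γ' : Set V} (hΓ : Γ' ∈ L) (hmax : ∀ T ∈ L, Γ' ⊂ T → T = Set.univ)
    {x y : V} (hx : x ∈ Γ') (hxy : G.Reachable x y) (hy : y ∉ Γ') :
    {u : V | G.Reachable x u} ∪ Γ' = Set.univ := by
  obtain ⟨z, hxz⟩ := hxy.exists_adj_of_ne (ne_of_mem_of_not_mem hx hy)
  have hunion := hb _ (hc x z hxz) _ hΓ (lkSet_inter_subset_stSet_component G hx)
  exact hmax _ hunion ⟨Set.subset_union_right, fun h => hy (h (Or.inl hxy))⟩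

theorem maximal_invariant_subgraph_dichotomy_general {V : Type*}
    (G : SimpleGraph V) (L : Set (Set V))
    (hb : ∀ Δ ∈ L, ∀ Sg ∈ L, lkSet G (Δ ∩ Sg) ⊆ stSet G Δ → Δ ∪ Sg ∈ L)
    (hc : ∀ x y : V, G.Adj x y → {u : V | G.Reachable x u} ∈ L)
    (Γ' : Set V) (hΓ : Γ' ∈ L)
    (hmax : ∀ T ∈ L, Γ' ⊂ T → T = Set.univ) :
    (∀ x ∈ Γ', ∀ y : V, G.Reachable x y → y ∈ Γ') ∨
    ∃ x : V, {u : V | G.Reachable x u}ᶜ ⊆ Γ' ∧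
      (Γ' ∩ {u : V | G.Reachable x u}).Nonempty ∧
      Γ' ∩ {u : V | G.Reachable x u} ⊂ {u : V | G.Reachable x u} := by
  refine or_iff_not_imp_left.mpr fun h => ?_
  push Not at h
  obtain ⟨x, hx, y, hxy, hy⟩ := h
  have hU := component_union_eq_univ_of_maximal G hb hc hΓ hmax hx hxy hy
  refine ⟨x, fun u hu => ?_, ⟨x, hx, .refl x⟩,
    ⟨Set.inter_subset_right, fun h => hy (h hxy).1⟩⟩
  exact (Set.eq_univ_iff_forall.mp hU u).resolve_left hu

theorem maximal_invariant_subgraph_dichotomy {V : Type*} [Fintype V]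
    (G : SimpleGraph V) (L : Set (Set V))
    (ha : ∀ Δ ∈ L, ∀ Sg ∈ L, Δ ∩ Sg ∈ L)
    (hb : ∀ Δ ∈ L, ∀ Sg ∈ L, lkSet G (Δ ∩ Sg) ⊆ stSet G Δ → Δ ∪ Sg ∈ L)
    (hc : ∀ x y : V, G.Adj x y → {u : V | G.Reachable x u} ∈ L)
    (huniv : Set.univ ∈ L)
    (Γ' : Set V) (hΓ : Γ' ∈ L) (hne : Γ' ≠ Set.univ)
    (hmax : ∀ T ∈ L, Γ' ⊂ T → T = Set.univ) :
    (∀ x ∈ Γ', ∀ y : V, G.Reachable x y → y ∈ Γ') ∨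
    ∃ x : V, {u : V | G.Reachable x u}ᶜ ⊆ Γ' ∧
      (Γ' ∩ {u : V | G.Reachable x u}).Nonempty ∧
      Γ' ∩ {u : V | G.Reachable x u} ⊂ {u : V | G.Reachable x u} :=
  maximal_invariant_subgraph_dichotomy_general G L hb hc Γ' hΓ hmax
end

section
/- Let Γ be a finite simplicial graph with vertex set V that is not a join, and let L be a collection of subsets of V containing V and such that st(Δ) ∈ L for every Δ ∈ L. Suppose Γ' ∈ L is nonempty and maximal with respect to inclusion among proper members of L. Then lk(Γ') = ∅. -/
/-- A graph is a join if its vertex set can be partitioned into two nonempty sets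
with every vertex of one adjacent to every vertex of the other. -/
def IsJoin {V : Type*} (G : SimpleGraph V) : Prop :=
  ∃ A B : Set V, A.Nonempty ∧ B.Nonempty ∧ A ∪ B = Set.univ ∧ A ∩ B = ∅ ∧
    ∀ a ∈ A, ∀ b ∈ B, G.Adj a b

section

variable {V : Type*} {G : SimpleGraph V} {Δ : Set V}

theorem disjoint_lkSet_self : Disjoint Δ (lkSet G Δ) :=
  Set.disjoint_left.mpr fun v hv hlk => G.loopless.irrefl v (hlk v hv)

theorem ssubset_stSet_of_lkSet_nonempty (hlk : (lkSet G Δ).Nonempty) : Δ ⊂ stSet G Δ := by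
  obtain ⟨u, hu⟩ := hlk
  exact Set.ssubset_iff_of_subset Set.subset_union_left |>.mpr
    ⟨u, Or.inr hu, disjoint_lkSet_self.notMem_of_mem_right hu⟩

theorem isJoin_of_stSet_eq_univ (hΔ : Δ.Nonempty) (hlk : (lkSet G Δ).Nonempty)
    (hst : stSet G Δ = Set.univ) : IsJoin G :=
  ⟨Δ, lkSet G Δ, hΔ, hlk, hst, disjoint_lkSet_self.inter_eq, fun a ha _ hb => hb a ha⟩

end

theorem lk_of_maximal_eq_empty_general {V : Type*} (G : SimpleGraph V)
    (hjoin : ¬ IsJoin G)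
    (L : Set (Set V))
    (hst : ∀ Δ ∈ L, stSet G Δ ∈ L)
    (Γ' : Set V) (hΓ : Γ' ∈ L) (hΓne : Γ'.Nonempty)
    (hmax : ∀ T ∈ L, Γ' ⊂ T → T = Set.univ) :
    lkSet G Γ' = ∅ := by
  rw [← Set.not_nonempty_iff_eq_empty]
  intro hlk
  have hst_univ : stSet G Γ' = Set.univ :=
    hmax _ (hst Γ' hΓ) (ssubset_stSet_of_lkSet_nonempty hlk)
  exact hjoin (isJoin_of_stSet_eq_univ hΓne hlk hst_univ)

theorem lk_of_maximal_eq_empty {V : Type*} [Fintype V] (G : SimpleGraph V)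
    (hjoin : ¬ IsJoin G)
    (L : Set (Set V)) (huniv : Set.univ ∈ L)
    (hst : ∀ Δ ∈ L, stSet G Δ ∈ L)
    (Γ' : Set V) (hΓ : Γ' ∈ L) (hΓne : Γ'.Nonempty) (hne : Γ' ≠ Set.univ)
    (hmax : ∀ T ∈ L, Γ' ⊂ T → T = Set.univ) :
    lkSet G Γ' = ∅ :=
  lk_of_maximal_eq_empty_general G hjoin L hst Γ' hΓ hΓne hmax
end

section
/- Let Γ be a finite simplicial graph, and let s be a vertex such that some vertex u ≠ s is not adjacent to s. Let n ≥ 1 be an integer, and let h₁, h₂ be automorphisms of A_Γ with hᵢ(s) = s and hᵢ(A_{lk(s)}) = A_{lk(s)} for i = 1, 2, such that h₂ = c(sˡ t) ∘ h₁ for some integer l and some t ∈ A_{lk(s)}. Suppose that for i = 1, 2 one has hᵢⁿ = c(s^{Kᵢ} tᵢ) for integers Kᵢ and elements tᵢ ∈ A_{lk(s)}. Then K₂ ≡ K₁ (mod n); in fact K₂ = K₁ + n·l. -/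
open scoped commutatorElement

/-!
Map `A_Γ` to the infinite dihedral group by sending `s` to the unit rotation, `u` to a
reflection and every other vertex to `1`; this respects the relations because `u` and `s` are
not adjacent, and it kills `A_{lk(s)}`. Since `h₁` fixes `s` and preserves `A_{lk(s)}`,
`h₂ⁿ = c(∏_{j<n} h₁ʲ(sˡ t)) ∘ h₁ⁿ` with every factor mapping to the rotation by `l`. Comparing
the two expressions for `h₂ⁿ(u)` in the dihedral group, where conjugating a reflection by the
rotation by `K` shifts it by `2K`, gives `K₂ = n l + K₁`.
-/

open DihedralGroup

section RAAG

variable {V : Type*} (G : SimpleGraph V)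

def raagLift {H : Type*} [Group H] (f : V → H)
    (hf : ∀ v w, G.Adj v w → Commute (f v) (f w)) : RAAG G →* H :=
  PresentedGroup.toGroup (rels := raagRels G) (f := f) <| by
    rintro _ ⟨v, w, hvw, rfl⟩
    rw [map_commutatorElement, FreeGroup.lift_apply_of, FreeGroup.lift_apply_of]
    exact commutatorElement_eq_one_iff_commute.2 (hf v w hvw)

@[simp]
theorem raagLift_raagGen {H : Type*} [Group H] (f : V → H)
    (hf : ∀ v w, G.Adj v w → Commute (f v) (f w)) (v : V) :
    raagLift G f hf (raagGen G v) = f v :=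
  PresentedGroup.toGroup.of _

theorem raagSub_le_ker {H : Type*} [Group H] (ψ : RAAG G →* H) {Δ : Set V}
    (hΔ : ∀ v ∈ Δ, ψ (raagGen G v) = 1) : raagSub G Δ ≤ ψ.ker :=
  (Subgroup.closure_le _).2 <| by
    rintro _ ⟨v, hv, rfl⟩
    exact hΔ v hv

end RAAG

section Rotation

variable {V : Type*} [DecidableEq V] {G : SimpleGraph V} {s u : V}

def rotationChar (s u v : V) : DihedralGroup 0 :=
  if v = s then r 1 else if v = u then sr 0 else 1

theorem commute_rotationChar_of_adj (huadj : ¬ G.Adj u s) {v w : V} (hvw : G.Adj v w) :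
    Commute (rotationChar s u v) (rotationChar s u w) := by
  have hne : v ≠ w := G.ne_of_adj hvw
  unfold rotationChar
  by_cases hvs : v = s <;> by_cases hvu : v = u <;> by_cases hws : w = s <;>
    by_cases hwu : w = u <;> subst_vars <;> simp_all [Commute.one_left, Commute.one_right, G.adj_comm]

variable (G) in
theorem exists_raagHom_dihedral_of_not_adj (hu : u ≠ s) (huadj : ¬ G.Adj u s) :
    ∃ ψ : RAAG G →* DihedralGroup 0, ψ (raagGen G s) = r 1 ∧ ψ (raagGen G u) = sr 0 ∧
      ∀ x ∈ raagSub G (lkSet G {s}), ψ x = 1 := by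
  refine ⟨raagLift G (rotationChar s u) fun _ _ => commute_rotationChar_of_adj huadj,
    by simp [rotationChar], by simp [rotationChar, hu], fun x hx => raagSub_le_ker G _ ?_ hx⟩
  intro v hv
  have hsv : G.Adj s v := hv s rfl
  have hvu : v ≠ u := fun h => huadj (h ▸ hsv.symm)
  simp [rotationChar, hsv.ne', hvu]

end Rotation

theorem DihedralGroup.eq_of_conj_sr_zero_eq {k m : ℤ}
    (h : (r 1 ^ k * sr 0 * (r 1 ^ k)⁻¹ : DihedralGroup 0) = r 1 ^ m * sr 0 * (r 1 ^ m)⁻¹) :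
    k = m := by
  simp only [r_one_zpow, r_mul_sr, inv_r, sr_mul_r, sr.injEq] at h
  norm_cast at h
  omega

namespace MulAut

variable {H : Type*} [Group H]

theorem mul_conj (h : MulAut H) (x : H) : h * conj x = conj (h x) * h := by
  ext g
  simp [mul_assoc]

theorem conj_mul_pow (c : H) (h : MulAut H) (k : ℕ) :
    (conj c * h) ^ k = conj ((List.range k).map fun j => (h ^ j) c).prod * h ^ k := by
  induction k with
  | zero => simp
  | succ k ih =>
    rw [pow_succ, ih, List.range_succ, List.map_append, List.prod_append, mul_assoc,
      ← mul_assoc (h ^ k), mul_conj, pow_succ]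
    simp [mul_assoc]

theorem pow_apply_eq_self {h : MulAut H} {a : H} (ha : h a = a) (k : ℕ) : (h ^ k) a = a := by
  induction k with
  | zero => rfl
  | succ k ih => rw [pow_succ, mul_apply, ha, ih]

theorem pow_apply_mem {h : MulAut H} {L : Subgroup H} (hL : L.map h.toMonoidHom ≤ L)
    (k : ℕ) {x : H} (hx : x ∈ L) : (h ^ k) x ∈ L := by
  induction k with
  | zero => exact hx
  | succ k ih => rw [pow_succ', mul_apply]; exact hL ⟨_, ih, rfl⟩

end MulAut

theorem rotation_number_well_defined_general {V : Type*} (G : SimpleGraph V)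
    (s u : V) (hu : u ≠ s) (huadj : ¬ G.Adj u s)
    (n : ℕ)
    (h₁ h₂ : MulAut (RAAG G))
    (hs1 : h₁ (raagGen G s) = raagGen G s)
    (hl1 : (raagSub G (lkSet G {s})).map h₁.toMonoidHom = raagSub G (lkSet G {s}))
    (l : ℤ) (t : RAAG G) (ht : t ∈ raagSub G (lkSet G {s}))
    (hcomp : h₂ = MulAut.conj (raagGen G s ^ l * t) * h₁)
    (K₁ K₂ : ℤ) (t₁ t₂ : RAAG G)
    (ht₁ : t₁ ∈ raagSub G (lkSet G {s}))
    (ht₂ : t₂ ∈ raagSub G (lkSet G {s}))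
    (hpow1 : h₁ ^ n = MulAut.conj (raagGen G s ^ K₁ * t₁))
    (hpow2 : h₂ ^ n = MulAut.conj (raagGen G s ^ K₂ * t₂)) :
    K₂ = K₁ + (n : ℤ) * l := by
  classical
  obtain ⟨ψ, hψs, hψu, hker⟩ := exists_raagHom_dihedral_of_not_adj G hu huadj
  set P := ((List.range n).map fun j => (h₁ ^ j) (raagGen G s ^ l * t)).prod
  have hψP : ψ P = r 1 ^ ((n : ℤ) * l) := by
    have hψ : ∀ j : ℕ, ψ ((h₁ ^ j) (raagGen G s ^ l * t)) = r 1 ^ l := fun j => by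
      rw [map_mul, map_zpow, MulAut.pow_apply_eq_self hs1, map_mul,
        hker _ (MulAut.pow_apply_mem hl1.le j ht), map_zpow, hψs, mul_one]
    rw [map_list_prod, List.map_map, Function.comp_def]
    simp only [hψ, List.map_const', List.length_range, List.prod_replicate]
    rw [← zpow_natCast, ← zpow_mul, mul_comm]
  have hconj : MulAut.conj (raagGen G s ^ K₂ * t₂) = MulAut.conj (P * (raagGen G s ^ K₁ * t₁)) := by
    rw [← hpow2, hcomp, MulAut.conj_mul_pow, hpow1, ← map_mul]
  have hconj_u := DFunLike.congr_fun hconj (raagGen G u)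
  simp only [MulAut.conj_apply] at hconj_u
  replace hconj_u := congrArg ψ hconj_u
  simp only [map_mul, map_inv, map_zpow, hψP, hker _ ht₁, hker _ ht₂, mul_one,
    hψs, hψu, ← zpow_add] at hconj_u
  linarith [DihedralGroup.eq_of_conj_sr_zero_eq hconj_u]

theorem rotation_number_well_defined {V : Type*} [Fintype V] (G : SimpleGraph V)
    (s u : V) (hu : u ≠ s) (huadj : ¬ G.Adj u s)
    (n : ℕ) (hn : 1 ≤ n)
    (h₁ h₂ : MulAut (RAAG G))
    (hs1 : h₁ (raagGen G s) = raagGen G s)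
    (hs2 : h₂ (raagGen G s) = raagGen G s)
    (hl1 : (raagSub G (lkSet G {s})).map h₁.toMonoidHom = raagSub G (lkSet G {s}))
    (hl2 : (raagSub G (lkSet G {s})).map h₂.toMonoidHom = raagSub G (lkSet G {s}))
    (l : ℤ) (t : RAAG G) (ht : t ∈ raagSub G (lkSet G {s}))
    (hcomp : h₂ = MulAut.conj (raagGen G s ^ l * t) * h₁)
    (K₁ K₂ : ℤ) (t₁ t₂ : RAAG G)
    (ht₁ : t₁ ∈ raagSub G (lkSet G {s}))
    (ht₂ : t₂ ∈ raagSub G (lkSet G {s}))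
    (hpow1 : h₁ ^ n = MulAut.conj (raagGen G s ^ K₁ * t₁))
    (hpow2 : h₂ ^ n = MulAut.conj (raagGen G s ^ K₂ * t₂)) :
    K₂ = K₁ + (n : ℤ) * l :=
  rotation_number_well_defined_general G s u hu huadj n h₁ h₂ hs1 hl1 l t ht hcomp K₁ K₂ t₁ t₂ ht₁
    ht₂ hpow1 hpow2
end
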